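/- arXiv:1201.4662 — 6 statements merged into one kernel-verified Lean document; each statement's English description precedes it below -/
import Mathlib

section
/- Let E be a finite set, let A1, A2 ⊆ E and let a1, a2 be natural numbers with a1 < |A1|. Then {I ⊆ E : |I ∩ A2| ≤ a2} ⊆ {I ⊆ E : |I ∩ A1| ≤ a1} if and only if |A1 \ A2| + a2 ≤ a1. -/
/-!
Every `I` satisfies `|I ∩ A₁| ≤ |I ∩ A₂| + |A₁ \ A₂|`, which gives sufficiency. For necessity,
take `A₁ \ A₂` together with as many elements of `A₁ ∩ A₂` as `(A₂, a₂)_≤` allows: this set lies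
in `(A₂, a₂)_≤`, and its size is `min (|A₁ \ A₂| + a₂) |A₁|`, which exceeds `a₁` unless
`|A₁ \ A₂| + a₂ ≤ a₁`, because `a₁ < |A₁|`.
-/

open Finset

namespace Finset

variable {α : Type*} [DecidableEq α]

theorem card_inter_le_card_inter_add_card_sdiff (I A B : Finset α) :
    #(I ∩ A) ≤ #(I ∩ B) + #(A \ B) :=
  calc #(I ∩ A) ≤ #((I ∩ B) ∪ (A \ B)) := card_le_card fun x ↦ by
        simp only [mem_inter, mem_union, mem_sdiff]
        tauto
    _ ≤ #(I ∩ B) + #(A \ B) := card_union_le _ _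

theorem exists_subset_card_inter_le_card_eq_min (A B : Finset α) (n : ℕ) :
    ∃ I ⊆ A, #(I ∩ B) ≤ n ∧ #I = min (#(A \ B) + n) #A := by
  obtain ⟨I, hsdiff, hIA, hI⟩ := exists_subsuperset_card_eq (sdiff_subset : A \ B ⊆ A)
    (le_min (Nat.le_add_right _ _) (card_le_card sdiff_subset)) (min_le_right _ _)
  refine ⟨I, hIA, ?_, hI⟩
  have hIB : I ∩ B ⊆ I \ (A \ B) := fun x hx ↦ by
    simp only [mem_inter, mem_sdiff] at hx ⊢
    tauto
  have := (card_le_card hIB).trans_eq (card_sdiff_of_subset hsdiff)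
  omega

end Finset

theorem linear_inequality_subset_iff_general {α : Type*} [DecidableEq α]
    (E A₁ A₂ : Finset α) (a₁ a₂ : ℕ) (hA₁ : A₁ ⊆ E)
    (ha₁ : a₁ < A₁.card) :
    (∀ I ⊆ E, (I ∩ A₂).card ≤ a₂ → (I ∩ A₁).card ≤ a₁) ↔
      (A₁ \ A₂).card + a₂ ≤ a₁ := by
  constructor
  · intro h
    obtain ⟨I, hIA₁, hIA₂, hI⟩ := exists_subset_card_inter_le_card_eq_min A₁ A₂ a₂
    have := h I (hIA₁.trans hA₁) hIA₂
    rw [inter_eq_left.2 hIA₁, hI] at this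
    omega
  · intro h I _ hI
    have := card_inter_le_card_inter_add_card_sdiff I A₁ A₂
    omega

/-- For a finite ground set `E`, subsets `A₁, A₂ ⊆ E` and naturals `a₁, a₂` with
`a₁ < |A₁|`, the linear inequality `(A₂, a₂)_≤` implies `(A₁, a₁)_≤` on subsets of `E`
if and only if `|A₁ \ A₂| + a₂ ≤ a₁`. -/
theorem linear_inequality_subset_iff {α : Type*} [DecidableEq α]
    (E A₁ A₂ : Finset α) (a₁ a₂ : ℕ) (hA₁ : A₁ ⊆ E) (hA₂ : A₂ ⊆ E)
    (ha₁ : a₁ < A₁.card) :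
    (∀ I ⊆ E, (I ∩ A₂).card ≤ a₂ → (I ∩ A₁).card ≤ a₁) ↔
      (A₁ \ A₂).card + a₂ ≤ a₁ :=
  linear_inequality_subset_iff_general E A₁ A₂ a₁ a₂ hA₁ ha₁
end

section
/- Let M1 and M2 be matroids on a common finite ground set E with rank functions r1 and r2 respectively, and assume r1(E) = r2(E). Then every base of M2 is a base of M1 if and only if r2(A) ≤ r1(A) for all A ⊆ E. -/
open Set Matroid

namespace PaperWMO

variable {α : Type*}

/-- The rank of a set `X` in a matroid `M`: the size of a largest independent subset of `X`. -/
noncomputable def rk (M : Matroid α) (X : Set α) : ℕ :=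
  sSup {n : ℕ | ∃ I, M.Indep I ∧ I ⊆ X ∧ I.ncard = n}

/-- Contraction of the set `C` in the matroid `M`, defined by duality:
`M / C = (M✶ \ C)✶`, where deletion is restriction to the complement. -/
noncomputable def contract (M : Matroid α) (C : Set α) : Matroid α :=
  (M✶ ↾ (M.E \ C))✶

/-- A matroid is connected if its ground set is nonempty and it is not the direct sum of
two matroids on nonempty disjoint ground sets. -/
def Conn (M : Matroid α) : Prop :=
  M.E.Nonempty ∧ ¬ ∃ (M₁ M₂ : Matroid α) (h : Disjoint M₁.E M₂.E),
    M₁.E.Nonempty ∧ M₂.E.Nonempty ∧ M = Matroid.disjointSum M₁ M₂ h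

/-- A flat of `M`: a subset `F` of the ground set such that any superset
`B` with `F ⊆ B ⊆ M.E` of the same rank equals `F`. -/
def IsFlat (M : Matroid α) (F : Set α) : Prop :=
  F ⊆ M.E ∧ ∀ B : Set α, F ⊆ B → B ⊆ M.E → rk M B = rk M F → B = F

/-- A matroid is simple if every subset of the ground set with at most two elements
is independent. -/
def IsSimple (M : Matroid α) : Prop :=
  ∀ X ⊆ M.E, X.ncard ≤ 2 → M.Indep X

/-- A facet-defining flat of rank 2: a flat `F` of rank 2 such that
both the restriction `M ↾ F` and the contraction `M / F` are connected. -/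
def FacetFlat2 (M : Matroid α) (F : Set α) : Prop :=
  IsFlat M F ∧ rk M F = 2 ∧ Conn (M ↾ F) ∧ Conn (contract M F)

/-- `M` is 2-decomposable by the hyperplane `(A, a)_=`. -/
def TwoDecomposableBy (M : Matroid α) (A : Set α) (a : ℕ) : Prop :=
  (∃ N₁ : Matroid α, N₁.E = M.E ∧
      ∀ B : Set α, N₁.IsBase B ↔ M.IsBase B ∧ (B ∩ A).ncard ≤ a) ∧
  (∃ N₂ : Matroid α, N₂.E = M.E ∧
      ∀ B : Set α, N₂.IsBase B ↔ M.IsBase B ∧ a ≤ (B ∩ A).ncard) ∧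
  (∃ B : Set α, M.IsBase B ∧ a < (B ∩ A).ncard) ∧
  (∃ B : Set α, M.IsBase B ∧ (B ∩ A).ncard < a)

/-- A 3-partition in `M`: a partition of the ground set into three parts, each of size
at least two, such that no facet-defining flat of rank 2 meets all three parts, and the
union of any two parts has rank 3. -/
def ThreePartition (M : Matroid α) (A₁ A₂ A₃ : Set α) : Prop :=
  A₁ ∪ A₂ ∪ A₃ = M.E ∧
  Disjoint A₁ A₂ ∧ Disjoint A₂ A₃ ∧ Disjoint A₁ A₃ ∧
  2 ≤ A₁.ncard ∧ 2 ≤ A₂.ncard ∧ 2 ≤ A₃.ncard ∧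
  (¬ ∃ F : Set α, FacetFlat2 M F ∧
      (F ∩ A₁).Nonempty ∧ (F ∩ A₂).Nonempty ∧ (F ∩ A₃).Nonempty) ∧
  rk M (A₁ ∪ A₂) = 3 ∧ rk M (A₂ ∪ A₃) = 3 ∧ rk M (A₃ ∪ A₁) = 3

/-- The adjacency relation of the graph `g(A, B)` (with respect to the matroid `M`):
the vertex set is `B`, and distinct `x, y ∈ B` are adjacent iff some facet-defining flat
of rank 2 of `M` contains both `x` and `y` and meets `A`. -/
def gAdj (M : Matroid α) (A B : Set α) (x y : α) : Prop :=
  x ∈ B ∧ y ∈ B ∧ x ≠ y ∧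
    ∃ F : Set α, FacetFlat2 M F ∧ x ∈ F ∧ y ∈ F ∧ (F ∩ A).Nonempty

/-- `C` is the vertex set of a connected component of the graph `g(S, V)`. -/
def IsGComponent (M : Matroid α) (S V C : Set α) : Prop :=
  ∃ x ∈ V, C = {y | y ∈ V ∧ Relation.ReflTransGen (gAdj M S V) x y}

/-! Once `rk` is identified with Mathlib's `eRk`, a weak map can only lower ranks, since every
`M₂`-independent set lies in an `M₂`-base and hence is `M₁`-independent. Conversely, a base `B`
of `M₂` has `|B| = r₂(B) ≤ r₁(B) ≤ |B|`, so it is `M₁`-independent, and it spans `M₁` because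
`r₁(B) ≥ r₂(E) = r₁(E)`. -/

lemma cast_rk_eq_eRk {M : Matroid α} {X : Set α} (hX : M.IsRkFinite X) :
    (rk M X : ℕ∞) = M.eRk X := by
  obtain ⟨I, hI⟩ := M.exists_isBasis' X
  have hIfin := hI.finite_of_isRkFinite hX
  suffices rk M X = I.ncard by rw [this, hIfin.cast_ncard_eq, hI.encard_eq_eRk]
  refine IsGreatest.csSup_eq ⟨⟨I, hI.indep, hI.subset, rfl⟩, ?_⟩
  rintro _ ⟨J, hJ, hJX, rfl⟩
  rw [← Nat.cast_le (α := ℕ∞), (hJ.finite_of_subset_isRkFinite hJX hX).cast_ncard_eq,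
    hIfin.cast_ncard_eq, hI.encard_eq_eRk]
  exact hJ.encard_le_eRk_of_subset hJX

lemma rk_le_rk_iff_eRk_le_eRk {M₁ M₂ : Matroid α} [M₁.RankFinite] [M₂.RankFinite] (X : Set α) :
    rk M₂ X ≤ rk M₁ X ↔ M₂.eRk X ≤ M₁.eRk X := by
  rw [← Nat.cast_le (α := ℕ∞), cast_rk_eq_eRk (M₂.isRkFinite_set X),
    cast_rk_eq_eRk (M₁.isRkFinite_set X)]

lemma indep_of_forall_isBase_imp {M₁ M₂ : Matroid α} (h : ∀ B, M₂.IsBase B → M₁.IsBase B)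
    {I : Set α} (hI : M₂.Indep I) : M₁.Indep I :=
  let ⟨B, hB, hIB⟩ := hI.exists_isBase_superset
  (h B hB).indep.subset hIB

lemma eRk_le_eRk_of_forall_indep_imp {M₁ M₂ : Matroid α} (h : ∀ I, M₂.Indep I → M₁.Indep I)
    (X : Set α) : M₂.eRk X ≤ M₁.eRk X :=
  eRk_le_iff.2 fun _ hIX hI ↦ (h _ hI).encard_le_eRk_of_subset hIX

lemma IsBase.isBase_of_eRk_le {M₁ M₂ : Matroid α} {B : Set α} (hB : M₂.IsBase B)
    (hBfin : B.Finite) (hrank : M₁.eRank ≤ M₂.eRank) (hBrk : M₂.eRk B ≤ M₁.eRk B) :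
    M₁.IsBase B := by
  have hBrk₂ : M₂.eRk B = B.encard := hB.indep.eRk_eq_encard
  have hB₁ : M₁.Indep B :=
    (indep_iff_eRk_eq_encard_of_finite hBfin).2 <|
      (M₁.eRk_le_encard B).antisymm (hBrk₂ ▸ hBrk)
  exact hB₁.isBase_of_eRk_ge hBfin (hrank.trans (hB.eRk_eq_eRank ▸ hBrk))

/-- Weak-map order and rank functions: for matroids `M₁, M₂` on a common finite ground set
with the same rank, every base of `M₂` is a base of `M₁` iff `rk M₂ A ≤ rk M₁ A` for all
`A ⊆ E`. -/
theorem base_subset_iff_rank_le (M₁ M₂ : Matroid α)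
    (hE : M₂.E = M₁.E) (hfin : M₁.E.Finite)
    (hr : rk M₂ M₂.E = rk M₁ M₁.E) :
    (∀ B : Set α, M₂.IsBase B → M₁.IsBase B) ↔
      ∀ A ⊆ M₁.E, rk M₂ A ≤ rk M₁ A := by
  have : M₁.Finite := ⟨hfin⟩
  have : M₂.Finite := ⟨hE ▸ hfin⟩
  have hrank : M₂.eRank = M₁.eRank := by
    rw [← eRk_ground, ← eRk_ground, ← cast_rk_eq_eRk (M₂.isRkFinite_set _),
      ← cast_rk_eq_eRk (M₁.isRkFinite_set _), hr]
  simp only [rk_le_rk_iff_eRk_le_eRk]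
  exact ⟨fun h A _ ↦ eRk_le_eRk_of_forall_indep_imp (fun _ ↦ indep_of_forall_isBase_imp h) A,
    fun h B hB ↦ IsBase.isBase_of_eRk_le hB hB.finite hrank.ge (h B (hE ▸ hB.subset_ground))⟩

end PaperWMO
end

section
/- Let M be a loopless matroid on a finite ground set E with rank function r, let A ⊆ E be a set that is not a flat of M, and let cl(A) denote the closure of A in M. Then the family {I : I independent in M and |I ∩ A| = r(A)} is a proper subset of the family {I : I independent in M and |I ∩ cl(A)| = r(A)}. (In particular, the face of the independence system defined by (A, r(A))_= is strictly contained in the face defined by (cl(A), r(cl(A)))_=, so (A, r(A))_≤ is not facet-defining.) -/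
/-! A set `A` that is not a flat misses some element `e` of its closure, and `e` is a nonloop.
A basis of `cl(A)` through `e` meets `cl(A)` in `r(cl(A)) = r(A)` elements but `A` in fewer. -/

open Set Matroid

namespace PaperWMO

variable {α : Type*}

/-- The smallest flat of `M` containing `A` (the closure of `A`). -/
def closureOf (M : Matroid α) (A : Set α) : Set α :=
  ⋂₀ {F : Set α | IsFlat M F ∧ A ⊆ F}

section

variable {M : Matroid α} {X I F : Set α} {e : α}

lemma _root_.Matroid.IsBasis'.rk_eq_ncard (hI : M.IsBasis' I X) (hX : M.IsRkFinite X) :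
    rk M X = I.ncard := by
  have hle : ∀ n ∈ {n : ℕ | ∃ J, M.Indep J ∧ J ⊆ X ∧ J.ncard = n}, n ≤ I.ncard := by
    rintro n ⟨J, hJ, hJX, rfl⟩
    have hJfin : J.Finite := hX.finite_of_indep_subset hJ hJX
    have hIfin : I.Finite := hX.finite_of_isBasis' hI
    rw [← ENat.natCast_le_natCast, hJfin.cast_ncard_eq, hIfin.cast_ncard_eq, hI.encard_eq_eRk]
    exact hJ.encard_le_eRk_of_subset hJX
  exact le_antisymm (csSup_le ⟨_, I, hI.indep, hI.subset, rfl⟩ hle)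
    (le_csSup ⟨_, hle⟩ ⟨I, hI.indep, hI.subset, rfl⟩)

lemma cast_rk (hX : M.IsRkFinite X) : (rk M X : ℕ∞) = M.eRk X := by
  obtain ⟨I, hI⟩ := M.exists_isBasis' X
  rw [hI.rk_eq_ncard hX, (hX.finite_of_isBasis' hI).cast_ncard_eq, hI.encard_eq_eRk]

lemma rk_closure (hX : M.IsRkFinite X) : rk M (M.closure X) = rk M X := by
  rw [← ENat.natCast_inj, cast_rk hX.closure, cast_rk hX, eRk_closure_eq]

lemma _root_.Matroid.Indep.ncard_inter_le_rk (hI : M.Indep I) (hX : M.IsRkFinite X) :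
    (I ∩ X).ncard ≤ rk M X := by
  rw [← ENat.natCast_le_natCast, (hX.finite_of_indep_subset (hI.subset inter_subset_left)
    inter_subset_right).cast_ncard_eq, cast_rk hX]
  exact (hI.subset inter_subset_left).encard_le_eRk_of_subset inter_subset_right

lemma isFlat_iff_matroid_isFlat [M.RankFinite] : IsFlat M F ↔ M.IsFlat F := by
  refine ⟨fun ⟨hFE, h⟩ ↦ ?_, fun hF ↦ ⟨hF.subset_ground, fun B hFB hBE hr ↦ ?_⟩⟩
  · rw [isFlat_iff_closure_eq]
    exact h _ (M.subset_closure F) (M.closure_subset_ground F) (rk_closure (M.isRkFinite_set F))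
  · have hcl : M.closure F = M.closure B :=
      (M.isRkFinite_set F).closure_eq_closure_of_subset_of_eRk_ge_eRk hFB <| by
        rw [← cast_rk (M.isRkFinite_set B), ← cast_rk (M.isRkFinite_set F), hr]
    exact (M.subset_closure B hBE).trans (hcl ▸ hF.closure).subset |>.antisymm hFB

lemma closureOf_eq_closure [M.RankFinite] (hX : X ⊆ M.E) : closureOf M X = M.closure X := by
  simp only [closureOf, M.closure_def' X hX, isFlat_iff_matroid_isFlat]

lemma exists_isBasis_closure_ncard_inter_lt [M.RankFinite] (he : M.IsNonloop e)
    (heX : e ∈ M.closure X \ X) :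
    ∃ J, M.IsBasis J (M.closure X) ∧ (J ∩ X).ncard < rk M X := by
  obtain ⟨J, hJ, heJ⟩ := he.indep.subset_isBasis_of_subset (singleton_subset_iff.2 heX.1)
  refine ⟨J, hJ, ?_⟩
  have hJX : J ∩ X ⊂ J :=
    ⟨inter_subset_left, fun h ↦ heX.2 (h (singleton_subset_iff.1 heJ)).2⟩
  rw [← rk_closure (M.isRkFinite_set X), hJ.isBasis'.rk_eq_ncard (M.isRkFinite_set _)]
  exact ncard_lt_ncard hJX hJ.indep.finite

end

/-- For a loopless matroid `M` and a set `A ⊆ E` that is not a flat, the face of the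
independence system defined by `(A, r(A))_=` is strictly contained in the face defined by
`(cl(A), r(cl(A)))_=`; so `(A, r(A))_≤` is not facet-defining. -/
theorem face_ssubset_of_not_flat (M : Matroid α) (hfin : M.E.Finite)
    (hloopless : ∀ e ∈ M.E, M.Indep {e})
    (A : Set α) (hA : A ⊆ M.E) (hnotflat : ¬ IsFlat M A) :
    {I : Set α | M.Indep I ∧ (I ∩ A).ncard = rk M A} ⊂
      {I : Set α | M.Indep I ∧ (I ∩ closureOf M A).ncard = rk M A} := by
  have : M.Finite := ⟨hfin⟩
  have hrk := M.isRkFinite_set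
  rw [closureOf_eq_closure hA]
  refine ⟨fun I ⟨hI, hIA⟩ ↦ ⟨hI, le_antisymm ?_ ?_⟩, fun hsub ↦ ?_⟩
  · exact rk_closure (hrk A) ▸ hI.ncard_inter_le_rk (hrk _)
  · exact hIA ▸ ncard_le_ncard (inter_subset_inter_right I (M.subset_closure A))
      (hI.finite.subset inter_subset_left)
  · obtain ⟨e, heA⟩ : (M.closure A \ A).Nonempty := by
      rw [sdiff_nonempty]
      exact fun h ↦ hnotflat (isFlat_iff_matroid_isFlat.2
        (isFlat_iff_closure_eq.2 (h.antisymm (M.subset_closure A))))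
    obtain ⟨J, hJ, hlt⟩ := exists_isBasis_closure_ncard_inter_lt
      (indep_singleton.1 (hloopless e (M.closure_subset_ground A heA.1))) heA
    have hJ_face : J ∈ {I : Set α | M.Indep I ∧ (I ∩ M.closure A).ncard = rk M A} := by
      rw [mem_ofPred_eq, inter_eq_self_of_subset_left hJ.subset,
        ← hJ.isBasis'.rk_eq_ncard (hrk _), rk_closure (hrk A)]
      exact ⟨hJ.indep, rfl⟩
    exact hlt.ne (hsub hJ_face).2

end PaperWMO
end

section
/- Let M be a connected matroid of rank 3 on a finite ground set E, and let A ⊆ E be a flat of M with r(A) = 1. Then the restriction M|A and the contraction M/A are both connected (i.e., (A,1)_≤ is a facet-defining inequality of the base system of M) if and only if there exists no pair of flats F1, F2 of M with r(F1) = r(F2) = 2, A = F1 ∩ F2 and F1 ∪ F2 = E. -/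
/-!
A matroid is disconnected exactly when its ground set splits into two nonempty parts `P`, `Q`
with `r(P) + r(Q) = r(E)`. Since `A` is a flat, `M / A` is loopless, and its rank function is
`X ↦ r(X ∪ A) - r(A)`, so `M / A` has rank 2 and such a split of `E \ A` is the same thing as a
pair of rank-2 flats `P ∪ A`, `Q ∪ A` of `M` meeting in `A` and covering `E`. The restriction
`M | A` is always connected: `M` is connected of rank 3, hence loopless, so all elements of the
rank-one set `A` are parallel.
-/

open Set Matroid

namespace PaperWMO

variable {α : Type*}

section Rank

variable {M : Matroid α} {X Y I C P Q : Set α}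

lemma eRk_contract_add_eRk (M : Matroid α) (hXC : Disjoint X C) :
    (M ／ C).eRk X + M.eRk C = M.eRk (X ∪ C) := by
  obtain ⟨I, hI⟩ := M.exists_isBasis' C
  obtain ⟨K, hK, hIK⟩ := hI.indep.subset_isBasis'_of_subset (hI.subset.trans subset_union_right)
  have hKC : (M ／ C).IsBasis' (K \ C) X := by
    have h := hK.contract_isBasis' hI (hK.indep.subset (union_subset sdiff_subset hIK))
    rwa [union_sdiff_right, hXC.sdiff_eq_left] at h
  have hKI : K ∩ C = I :=
    (hI.eq_of_subset_indep (hK.indep.inter_right C) (subset_inter hIK hI.subset)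
      inter_subset_right).symm
  rw [hKC.eRk_eq_encard, hI.eRk_eq_encard, ← hKI, encard_sdiff_add_encard_inter,
    hK.eRk_eq_encard]

lemma eRk_disjointSum {N₁ N₂ : Matroid α} (h : Disjoint N₁.E N₂.E) (X : Set α) :
    (N₁.disjointSum N₂ h).eRk X = N₁.eRk (X ∩ N₁.E) + N₂.eRk (X ∩ N₂.E) := by
  obtain ⟨I₁, hI₁⟩ := N₁.exists_isBasis (X ∩ N₁.E)
  obtain ⟨I₂, hI₂⟩ := N₂.exists_isBasis (X ∩ N₂.E)
  have hI₁E : I₁ ⊆ N₁.E := hI₁.indep.subset_ground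
  have hI₂E : I₂ ⊆ N₂.E := hI₂.indep.subset_ground
  have hI₁₂ : Disjoint I₁ I₂ := h.mono hI₁E hI₂E
  have hb : (N₁.disjointSum N₂ h).IsBasis (I₁ ∪ I₂) (X ∩ (N₁.E ∪ N₂.E)) := by
    rw [disjointSum_isBasis_iff, union_inter_distrib_right, union_inter_distrib_right,
      (h.mono_left hI₁E).inter_eq, (h.symm.mono_left hI₂E).inter_eq, union_empty, empty_union,
      inter_eq_self_of_subset_left hI₁E, inter_eq_self_of_subset_left hI₂E, inter_assoc,
      inter_assoc, union_inter_cancel_left, union_inter_cancel_right, inter_union_distrib_left]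
    exact ⟨hI₁, hI₂, union_subset_union hI₁.subset hI₂.subset,
      union_subset_union inter_subset_right inter_subset_right⟩
  rw [← eRk_inter_ground, disjointSum_ground_eq, ← hb.encard_eq_eRk, encard_union_eq hI₁₂,
    hI₁.encard_eq_eRk, hI₂.encard_eq_eRk]

variable [M.RankFinite]

-- Without `RankFinite` the `sSup` defining `rk` may be the junk value `0`.
lemma rk_eq_ncard_of_isBasis' (hI : M.IsBasis' I X) : rk M X = I.ncard := by
  refine IsGreatest.csSup_eq ⟨⟨I, hI.indep, hI.subset, rfl⟩, ?_⟩
  rintro _ ⟨J, hJ, hJX, rfl⟩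
  have h := hJ.encard_le_eRk_of_subset hJX
  rw [← hI.encard_eq_eRk, ← hJ.finite.cast_ncard_eq, ← hI.indep.finite.cast_ncard_eq] at h
  exact_mod_cast h

lemma cast_rk_s6 (M : Matroid α) [M.RankFinite] (X : Set α) : (rk M X : ℕ∞) = M.eRk X := by
  obtain ⟨I, hI⟩ := M.exists_isBasis' X
  rw [rk_eq_ncard_of_isBasis' hI, hI.indep.finite.cast_ncard_eq, hI.encard_eq_eRk]

lemma rk_mono (hXY : X ⊆ Y) : rk M X ≤ rk M Y := by
  have h := M.eRk_mono hXY
  rwa [← cast_rk_s6, ← cast_rk_s6, Nat.cast_le] at h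

lemma rk_singleton_le_one (e : α) : rk M {e} ≤ 1 := by
  have h := M.eRk_singleton_le e
  rwa [← cast_rk_s6, Nat.cast_le_one] at h

lemma rk_inter_add_rk_union_le (X Y : Set α) :
    rk M (X ∩ Y) + rk M (X ∪ Y) ≤ rk M X + rk M Y := by
  have h := M.eRk_inter_add_eRk_union_le X Y
  simp only [← cast_rk_s6] at h
  exact_mod_cast h

lemma rk_restrict {R : Set α} (hXR : X ⊆ R) : rk (M ↾ R) X = rk M X := by
  have h := M.restrict_eRk_eq hXR
  rwa [← cast_rk_s6, ← cast_rk_s6, Nat.cast_inj] at h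

lemma rk_contract_add_rk (hXC : Disjoint X C) : rk (M ／ C) X + rk M C = rk M (X ∪ C) := by
  have h := eRk_contract_add_eRk M hXC
  simp only [← cast_rk_s6] at h
  exact_mod_cast h

lemma union_indep_of_rk_add_rk_le {J : Set α} (hI : M.Indep I) (hJ : M.Indep J)
    (hIP : I ⊆ P) (hJQ : J ⊆ Q) (hPQ : rk M P + rk M Q ≤ rk M (P ∪ Q)) :
    M.Indep (I ∪ J) := by
  obtain ⟨I', hI', hII'⟩ := hI.subset_isBasis'_of_subset hIP
  obtain ⟨J', hJ', hJJ'⟩ := hJ.subset_isBasis'_of_subset hJQ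
  have hspan : M.eRk (I' ∪ J') = M.eRk (P ∪ Q) := by
    rw [hI'.eRk_eq_eRk_union, union_comm, hJ'.eRk_eq_eRk_union, union_comm]
  have hle : (I' ∪ J').encard ≤ M.eRk (I' ∪ J') := by
    rw [hspan, ← cast_rk_s6]
    calc (I' ∪ J').encard ≤ I'.encard + J'.encard := encard_union_le I' J'
      _ = rk M P + rk M Q := by rw [hI'.encard_eq_eRk, hJ'.encard_eq_eRk, cast_rk_s6, cast_rk_s6]
      _ ≤ rk M (P ∪ Q) := by exact_mod_cast hPQ
  exact ((M.isRkFinite_set _).indep_of_encard_le_eRk hle).subset (union_subset_union hII' hJJ')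

end Rank

section Connectivity

variable {N : Matroid α} [N.RankFinite] {P Q : Set α}

lemma rk_disjointSum_ground {N₁ N₂ : Matroid α} (h : Disjoint N₁.E N₂.E)
    [(N₁.disjointSum N₂ h).RankFinite] :
    rk (N₁.disjointSum N₂ h) (N₁.E ∪ N₂.E) =
      rk (N₁.disjointSum N₂ h) N₁.E + rk (N₁.disjointSum N₂ h) N₂.E := by
  have h₀ := eRk_disjointSum h (N₁.E ∪ N₂.E)
  have h₁ := eRk_disjointSum h N₁.E
  have h₂ := eRk_disjointSum h N₂.E
  simp only [union_inter_cancel_left, union_inter_cancel_right, inter_self, h.inter_eq,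
    h.symm.inter_eq, eRk_empty, add_zero, zero_add, ← cast_rk_s6] at h₀ h₁ h₂
  rw [← h₁, ← h₂] at h₀
  exact_mod_cast h₀

lemma not_conn_of_rk_add_rk_le (hPQ : Disjoint P Q) (hE : P ∪ Q = N.E) (hP : P.Nonempty)
    (hQ : Q.Nonempty) (hsep : rk N P + rk N Q ≤ rk N N.E) : ¬ Conn N := by
  rintro ⟨-, hN⟩
  refine hN ⟨N ↾ P, N ↾ Q, by simpa using hPQ, hP, hQ,
    ext_indep (by simp [hE]) fun K hK => ?_⟩
  rw [disjointSum_indep_iff, restrict_indep_iff, restrict_indep_iff]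
  refine ⟨fun hK' => ⟨⟨hK'.subset inter_subset_left, inter_subset_right⟩,
    ⟨hK'.subset inter_subset_left, inter_subset_right⟩, hE ▸ hK⟩, fun hK' => ?_⟩
  obtain ⟨⟨hKP, -⟩, ⟨hKQ, -⟩, -⟩ := hK'
  rw [← inter_eq_self_of_subset_left hK, ← hE, inter_union_distrib_left]
  exact union_indep_of_rk_add_rk_le hKP hKQ inter_subset_right inter_subset_right (hE ▸ hsep)

theorem conn_iff_forall_rk_lt :
    Conn N ↔ N.E.Nonempty ∧ ∀ P Q, Disjoint P Q → P ∪ Q = N.E →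
      P.Nonempty → Q.Nonempty → rk N N.E < rk N P + rk N Q := by
  refine ⟨fun h => ⟨h.1, fun P Q hPQ hE hP hQ => ?_⟩, fun ⟨hne, h⟩ => ⟨hne, ?_⟩⟩
  · by_contra! hsep
    exact not_conn_of_rk_add_rk_le hPQ hE hP hQ hsep h
  · rintro ⟨N₁, N₂, hdisj, h₁, h₂, rfl⟩
    have hlt := h N₁.E N₂.E hdisj disjointSum_ground_eq.symm h₁ h₂
    rw [disjointSum_ground_eq, rk_disjointSum_ground] at hlt
    exact hlt.false

lemma Conn.one_le_rk_singleton (hN : Conn N) (hr : 1 < rk N N.E) {e : α} (he : e ∈ N.E) :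
    1 ≤ rk N {e} := by
  have hne : (N.E \ {e}).Nonempty := by
    refine sdiff_nonempty.2 fun hE => ?_
    have hEe := rk_mono (M := N) hE
    have he₁ := rk_singleton_le_one (M := N) e
    omega
  have hlt := (conn_iff_forall_rk_lt.1 hN).2 {e} (N.E \ {e}) disjoint_sdiff_right
    (union_sdiff_cancel (singleton_subset_iff.2 he)) (singleton_nonempty e) hne
  have hsub := rk_mono (M := N) (sdiff_subset : N.E \ {e} ⊆ N.E)
  omega

lemma conn_of_rk_ground_le_one (hne : N.E.Nonempty) (hl : ∀ e ∈ N.E, 1 ≤ rk N {e})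
    (hr : rk N N.E ≤ 1) : Conn N := by
  refine conn_iff_forall_rk_lt.2 ⟨hne, fun P Q _ hE hP hQ => ?_⟩
  obtain ⟨x, hx⟩ := hP
  obtain ⟨y, hy⟩ := hQ
  have hxP := rk_mono (M := N) (singleton_subset_iff.2 hx)
  have hyQ := rk_mono (M := N) (singleton_subset_iff.2 hy)
  have hx₁ := hl x (hE ▸ mem_union_left Q hx)
  have hy₁ := hl y (hE ▸ mem_union_right P hy)
  omega

end Connectivity

section Flats

variable {M : Matroid α} [M.RankFinite] {A F F₁ F₂ P Q : Set α}

lemma isFlat_iff_forall_rk_lt :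
    IsFlat M F ↔ F ⊆ M.E ∧ ∀ e ∈ M.E \ F, rk M F < rk M (insert e F) := by
  refine ⟨fun hF => ⟨hF.1, fun e he => ?_⟩,
    fun ⟨hFE, h⟩ => ⟨hFE, fun B hFB hBE hr => ?_⟩⟩
  · refine (rk_mono (subset_insert e F)).lt_of_ne fun hr => he.2 ?_
    rw [← hF.2 _ (subset_insert e F) (insert_subset he.1 hF.1) hr.symm]
    exact mem_insert e F
  · refine (hFB.antisymm fun e heB => ?_).symm
    by_contra heF
    have hlt := h e ⟨hBE heB, heF⟩
    have hle := rk_mono (M := M) (insert_subset heB hFB)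
    omega

lemma IsFlat.one_le_rk_contract_singleton (hA : IsFlat M A) {e : α} (he : e ∈ M.E \ A) :
    1 ≤ rk (M ／ A) {e} := by
  have hlt := (isFlat_iff_forall_rk_lt.1 hA).2 e he
  have hadd := rk_contract_add_rk (M := M) (disjoint_singleton_left.2 he.2)
  rw [singleton_union] at hadd
  omega

lemma IsFlat.isFlat_union_of_contract_separator (hA : IsFlat M A) (hPQ : Disjoint P Q)
    (hE : P ∪ Q = M.E \ A)
    (hsep : rk (M ／ A) P + rk (M ／ A) Q ≤ rk (M ／ A) (M.E \ A)) : IsFlat M (P ∪ A) := by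
  have hPE : P ⊆ M.E \ A := hE ▸ subset_union_left
  have hPA : Disjoint P A := disjoint_of_subset_left hPE disjoint_sdiff_left
  refine isFlat_iff_forall_rk_lt.2 ⟨union_subset (hPE.trans sdiff_subset) hA.1, fun e he => ?_⟩
  have heA : e ∈ M.E \ A := ⟨he.1, fun h => he.2 (Or.inr h)⟩
  have heQ : e ∈ Q := ((hE ▸ heA : e ∈ P ∪ Q)).resolve_left fun h => he.2 (Or.inl h)
  -- submodularity across the separator: `e ∈ Q` raises the rank of `P` in `M ／ A`
  have hsub := rk_inter_add_rk_union_le (M := M ／ A) (insert e P) Q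
  rw [insert_inter_of_mem heQ, hPQ.inter_eq, insert_union, insert_eq_of_mem (mem_union_right P heQ),
    hE, insert_empty_eq] at hsub
  have he₁ := hA.one_le_rk_contract_singleton heA
  have hrP := rk_contract_add_rk (M := M) hPA
  have hreP := rk_contract_add_rk (M := M) (disjoint_insert_left.2 ⟨heA.2, hPA⟩)
  rw [insert_union] at hreP
  omega

lemma not_conn_contract_of_modular_cover (hcap : A = F₁ ∩ F₂) (hcup : F₁ ∪ F₂ = M.E)
    (hmod : rk M F₁ + rk M F₂ ≤ rk M A + rk M M.E) (h₁ : rk M A < rk M F₁)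
    (h₂ : rk M A < rk M F₂) : ¬ Conn (M ／ A) := by
  have hA₁ : A ⊆ F₁ := hcap ▸ inter_subset_left
  have hA₂ : A ⊆ F₂ := hcap ▸ inter_subset_right
  have hrk {X : Set α} (hAX : A ⊆ X) : rk (M ／ A) (X \ A) + rk M A = rk M X := by
    rw [rk_contract_add_rk disjoint_sdiff_left, sdiff_union_of_subset hAX]
  have hne {X : Set α} (hlt : rk M A < rk M X) : (X \ A).Nonempty :=
    sdiff_nonempty.2 fun hXA => (rk_mono hXA).not_gt hlt
  refine not_conn_of_rk_add_rk_le (P := F₁ \ A) (Q := F₂ \ A)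
    (disjoint_left.2 fun x hx₁ hx₂ => hx₁.2 (hcap ▸ ⟨hx₁.1, hx₂.1⟩))
    (by rw [contract_ground, ← hcup, union_sdiff_distrib]) (hne h₁) (hne h₂) ?_
  have hr₁ := hrk hA₁
  have hr₂ := hrk hA₂
  have hrE := hrk (hcup ▸ hA₁.trans subset_union_left : A ⊆ M.E)
  rw [contract_ground]
  omega

lemma exists_rk_two_flats_of_not_conn_contract (hrank : rk M M.E = 3) (hA : IsFlat M A)
    (hrA : rk M A = 1) (hN : ¬ Conn (M ／ A)) :
    ∃ F₁ F₂ : Set α, IsFlat M F₁ ∧ IsFlat M F₂ ∧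
      rk M F₁ = 2 ∧ rk M F₂ = 2 ∧ A = F₁ ∩ F₂ ∧ F₁ ∪ F₂ = M.E := by
  have hrE := rk_contract_add_rk (M := M) (disjoint_sdiff_left : Disjoint (M.E \ A) A)
  rw [sdiff_union_of_subset hA.1] at hrE
  have hne : (M.E \ A).Nonempty := sdiff_nonempty.2 fun hEA => by
    have := rk_mono (M := M) hEA
    omega
  obtain ⟨P, Q, hPQ, hE, ⟨x, hx⟩, ⟨y, hy⟩, hsep⟩ :
      ∃ P Q, Disjoint P Q ∧ P ∪ Q = M.E \ A ∧ P.Nonempty ∧ Q.Nonempty ∧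
        rk (M ／ A) P + rk (M ／ A) Q ≤ rk (M ／ A) (M.E \ A) := by
    simpa [conn_iff_forall_rk_lt, hne] using hN
  have hPA : Disjoint P A := disjoint_of_subset_left (hE ▸ subset_union_left) disjoint_sdiff_left
  have hQA : Disjoint Q A := disjoint_of_subset_left (hE ▸ subset_union_right) disjoint_sdiff_left
  have hxP := rk_mono (M := M ／ A) (singleton_subset_iff.2 hx)
  have hyQ := rk_mono (M := M ／ A) (singleton_subset_iff.2 hy)
  have hx₁ := hA.one_le_rk_contract_singleton (hE ▸ mem_union_left Q hx)
  have hy₁ := hA.one_le_rk_contract_singleton (hE ▸ mem_union_right P hy)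
  have hrP := rk_contract_add_rk (M := M) hPA
  have hrQ := rk_contract_add_rk (M := M) hQA
  refine ⟨P ∪ A, Q ∪ A, hA.isFlat_union_of_contract_separator hPQ hE hsep,
    hA.isFlat_union_of_contract_separator hPQ.symm (by rwa [union_comm])
      (by rwa [add_comm]), by omega, by omega, ?_, ?_⟩
  · rw [← inter_union_distrib_right, hPQ.inter_eq, empty_union]
  · rw [← union_union_distrib_right, hE, sdiff_union_of_subset hA.1]

lemma conn_restrict_of_rk_eq_one (hM : Conn M) (hr : 1 < rk M M.E) (hAE : A ⊆ M.E)
    (hrA : rk M A = 1) : Conn (M ↾ A) := by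
  refine conn_of_rk_ground_le_one ?_ (fun e he => ?_) ?_
  · rw [restrict_ground_eq, nonempty_iff_ne_empty]
    rintro rfl
    have h := cast_rk_s6 M ∅
    rw [hrA, eRk_empty] at h
    exact one_ne_zero h
  · rw [rk_restrict (R := A) (singleton_subset_iff.2 he)]
    exact hM.one_le_rk_singleton hr (hAE he)
  · rw [restrict_ground_eq, rk_restrict subset_rfl, hrA]

end Flats

/-- For a connected matroid `M` of rank 3 and a flat `A` of rank 1, the inequality
`(A,1)_≤` is facet-defining (i.e. `M|A` and `M/A` are both connected) iff there is no
pair of rank-2 flats `F₁, F₂` with `A = F₁ ∩ F₂` and `F₁ ∪ F₂ = E`. -/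
theorem rank_one_flat_facet_iff (M : Matroid α) (hfin : M.E.Finite)
    (hconn : Conn M) (hrank : rk M M.E = 3)
    (A : Set α) (hflat : IsFlat M A) (hrA : rk M A = 1) :
    (Conn (M ↾ A) ∧ Conn (contract M A)) ↔
      ¬ ∃ F₁ F₂ : Set α, IsFlat M F₁ ∧ IsFlat M F₂ ∧
        rk M F₁ = 2 ∧ rk M F₂ = 2 ∧ A = F₁ ∩ F₂ ∧ F₁ ∪ F₂ = M.E := by
  have : M.Finite := ⟨hfin⟩
  refine ⟨?_, fun hno => ⟨conn_restrict_of_rk_eq_one hconn (by omega) hflat.1 hrA, ?_⟩⟩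
  · rintro ⟨-, hN⟩ ⟨F₁, F₂, -, -, hr₁, hr₂, hcap, hcup⟩
    exact not_conn_contract_of_modular_cover hcap hcup (by omega) (by omega) (by omega) hN
  · by_contra hN
    exact hno (exists_rk_two_flats_of_not_conn_contract hrank hflat hrA hN)

end PaperWMO
end

section
/- Let M be a connected simple matroid of rank 3 on a finite ground set E with rank function r, and let A ⊆ E. Then M is 2-decomposable by the hyperplane (A,2)_= if and only if the following three conditions hold: (1) |E \ A| ≥ 2; (2) r(A) = 3; (3) every facet-defining flat F of rank 2 of M satisfies |A ∩ F| ≤ 1, or F ⊆ A, or A ∪ F = E. -/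
open Set Matroid

namespace PaperWMO

variable {α : Type*}

/-!
For a base `B` of a rank-3 matroid, `|B ∩ A| ≤ 2` means `B ⊄ A` and `|B ∩ A| ≥ 2` means
`|B \ A| ≤ 1`, so both halves of the decomposition are families of bases, and we check the base
exchange axiom for them. Removing `a` from `B₁` leaves a pair spanning a line `L`; the exchange
can only fail if every admissible replacement from `B₂` lies on `L`. Then `L` has two points in
`A` and one outside, so it is a facet-defining flat (lines with at least three points are), and
condition (3) gives `A ∪ L = E`, which puts `a`, or all of `B₂`, on `L`: impossible.

Conversely, if a rank-2 flat `F` has points `a, b ∈ A`, `f ∉ A`, and some `g` lies outside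
`A ∪ F`, exchange `g` out of the base `{a, b, g}` against a base inside `A ∪ {f}` containing `f`:
the only candidate is `f`, and `{a, b, f} ⊆ F` is dependent.
-/

variable {M : Matroid α} {A B B₁ B₂ C F H I J X : Set α} {a b x y z : α}

lemma ncard_le_ncard_of_isBasis' [M.RankFinite] (hI : M.Indep I) (hIX : I ⊆ X)
    (hJ : M.IsBasis' J X) : I.ncard ≤ J.ncard := by
  have h := hI.encard_le_eRk_of_subset hIX
  rw [← hJ.encard_eq_eRk, ← hI.finite.cast_ncard_eq, ← hJ.indep.finite.cast_ncard_eq] at h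
  exact_mod_cast h

lemma rk_eq_ncard_of_isBasis'_s9 [M.RankFinite] (hJ : M.IsBasis' J X) : rk M X = J.ncard :=
  IsGreatest.csSup_eq ⟨⟨J, hJ.indep, hJ.subset, rfl⟩,
    fun _ ⟨_, hI, hIX, hn⟩ ↦ hn ▸ ncard_le_ncard_of_isBasis' hI hIX hJ⟩

lemma ncard_le_rk_of_indep [M.RankFinite] (hI : M.Indep I) (hIX : I ⊆ X) :
    I.ncard ≤ rk M X := by
  obtain ⟨J, hJ⟩ := M.exists_isBasis' X
  exact (rk_eq_ncard_of_isBasis'_s9 hJ).symm ▸ ncard_le_ncard_of_isBasis' hI hIX hJ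

lemma ncard_eq_rk_ground_of_isBase [M.RankFinite] (hB : M.IsBase B) : B.ncard = rk M M.E :=
  (rk_eq_ncard_of_isBasis'_s9 hB.isBasis_ground.isBasis').symm

lemma isBase_of_indep_of_rk_ground_le [M.RankFinite] (hI : M.Indep I)
    (h : rk M M.E ≤ I.ncard) : M.IsBase I := by
  obtain ⟨B, hB, hIB⟩ := hI.exists_isBase_superset
  rwa [Set.eq_of_subset_of_ncard_le hIB ((ncard_eq_rk_ground_of_isBase hB).trans_le h) hB.finite]

lemma rk_eq_rk_ground_iff [M.RankFinite] :
    rk M X = rk M M.E ↔ ∃ B, M.IsBase B ∧ B ⊆ X := by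
  obtain ⟨I, hI⟩ := M.exists_isBasis' X
  rw [rk_eq_ncard_of_isBasis'_s9 hI]
  refine ⟨fun h ↦ ⟨I, isBase_of_indep_of_rk_ground_le hI.indep h.ge, hI.subset⟩, ?_⟩
  rintro ⟨B, hB, hBX⟩
  refine le_antisymm (ncard_le_rk_of_indep hI.indep hI.indep.subset_ground) ?_
  exact (ncard_eq_rk_ground_of_isBase hB).symm.trans_le (ncard_le_ncard_of_isBasis' hB.indep hBX hI)

lemma isFlat_iff_isFlat [M.RankFinite] (hF : F ⊆ M.E) : IsFlat M F ↔ M.IsFlat F := by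
  obtain ⟨I, hI⟩ := M.exists_isBasis F
  refine ⟨fun ⟨_, hmax⟩ ↦ ?_, fun hflat ↦ ⟨hF, fun X hFX hX hrk ↦ ?_⟩⟩
  · have hcl : M.closure F = F := hmax _ (M.subset_closure F) (M.closure_subset_ground F) (by
      rw [rk_eq_ncard_of_isBasis'_s9 hI.isBasis_closure_right.isBasis',
        rk_eq_ncard_of_isBasis'_s9 hI.isBasis'])
    exact hcl ▸ M.isFlat_closure F
  · obtain ⟨J, hJ, hIJ⟩ := hI.indep.subset_isBasis_of_subset (hI.subset.trans hFX)
    rw [rk_eq_ncard_of_isBasis'_s9 hJ.isBasis', rk_eq_ncard_of_isBasis'_s9 hI.isBasis'] at hrk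
    obtain rfl := Set.eq_of_subset_of_ncard_le hIJ hrk.le hJ.indep.finite
    refine hFX.antisymm' (hJ.subset_closure.trans ?_)
    rw [hI.closure_eq_closure, hflat.closure]

lemma not_indep_of_subset_closure [M.RankFinite] (hH : M.Indep H) (hIH : I ⊆ M.closure H)
    (hlt : H.ncard < I.ncard) : ¬ M.Indep I := fun hI ↦ by
  have := ncard_le_rk_of_indep hI hIH
  rw [rk_eq_ncard_of_isBasis'_s9 hH.isBasis_closure.isBasis'] at this
  omega

lemma conn_of_forall_exists_isCircuit {N : Matroid α} (hne : N.E.Nonempty)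
    (h : ∀ x ∈ N.E, ∀ y ∈ N.E, x ≠ y → ∃ C, N.IsCircuit C ∧ x ∈ C ∧ y ∈ C) : Conn N := by
  refine ⟨hne, ?_⟩
  rintro ⟨M₁, M₂, hdj, ⟨x, hx⟩, ⟨y, hy⟩, rfl⟩
  obtain ⟨C, hC, hxC, hyC⟩ := h x (by simp [hx]) y (by simp [hy]) (hdj.ne_of_mem hx hy)
  have h₁ := hC.ssubset_indep <|
    inter_ssubset_left_iff.2 fun hCE ↦ hdj.notMem_of_mem_right hy (hCE hyC)
  have h₂ := hC.ssubset_indep <|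
    inter_ssubset_left_iff.2 fun hCE ↦ hdj.notMem_of_mem_left hx (hCE hxC)
  simp only [disjointSum_indep_iff, inter_assoc, inter_self] at h₁ h₂
  exact hC.dep.not_indep (disjointSum_indep_iff.2 ⟨h₁.1, h₂.2.1, by simpa using hC.subset_ground⟩)

lemma IsSimple.isCircuit_of_dep (hs : IsSimple M) (hC : M.Dep C) (h3 : C.ncard = 3) :
    M.IsCircuit C := by
  refine isCircuit_iff_dep_forall_sdiff_singleton_indep.2 ⟨hC, fun e he ↦ ?_⟩
  refine hs _ (sdiff_subset.trans hC.subset_ground) ?_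
  rw [Set.ncard_sdiff_singleton_of_mem he, h3]

lemma conn_restrict_closure [M.RankFinite] (hs : IsSimple M) (hH : M.Indep H)
    (hH2 : H.ncard = 2) (h3 : 3 ≤ (M.closure H).ncard) : Conn (M ↾ M.closure H) := by
  refine conn_of_forall_exists_isCircuit (nonempty_of_ncard_ne_zero (s := M.closure H) (by omega))
    fun x hx y hy hxy ↦ ?_
  obtain ⟨z, hz, hzxy⟩ := Set.exists_mem_notMem_of_ncard_lt_ncard (s := {x, y})
    (t := M.closure H) (by rw [ncard_pair hxy]; omega)
  have hC3 : ({x, y, z} : Set α).ncard = 3 :=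
    Set.ncard_eq_three.2 ⟨x, y, z, hxy, by grind, by grind, rfl⟩
  have hCL : {x, y, z} ⊆ M.closure H := insert_subset hx (pair_subset hy hz)
  have hdep : M.Dep {x, y, z} :=
    ⟨not_indep_of_subset_closure hH hCL (by omega), hCL.trans (M.closure_subset_ground H)⟩
  exact ⟨_, (restrict_isCircuit_iff (M.closure_subset_ground H)).2
    ⟨hs.isCircuit_of_dep hdep hC3, hCL⟩, by simp, by simp⟩

lemma conn_contract_closure [M.RankFinite] (hrank : rk M M.E = 3) (hH : M.Indep H)
    (hH2 : H.ncard = 2) : Conn (contract M (M.closure H)) := by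
  set L := M.closure H
  have hspan : ∀ x ∈ M.E \ L, M.closure (insert x L) = M.E := fun x hx ↦ by
    have hxH : x ∉ H := notMem_subset (M.subset_closure H) hx.2
    have hB : M.IsBase (insert x H) := isBase_of_indep_of_rk_ground_le
      ((hH.insert_indep_iff_of_notMem hxH).2 hx)
      (by rw [ncard_insert_of_notMem hxH hH.finite, hH2, hrank])
    refine (M.closure_subset_ground _).antisymm ?_
    rw [← hB.closure_eq]
    exact M.closure_subset_closure (insert_subset_insert (M.subset_closure H))
  obtain ⟨B, hB⟩ := M.exists_isBase
  obtain ⟨x, hxB, hxL⟩ := not_subset.1 fun hBL ↦ not_indep_of_subset_closure hH hBL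
    (by rw [ncard_eq_rk_ground_of_isBase hB, hrank, hH2]; norm_num) hB.indep
  refine conn_of_forall_exists_isCircuit ⟨x, hB.subset_ground hxB, hxL⟩
    fun x hx y hy hxy ↦ ⟨{x, y}, ?_, by simp, by simp⟩
  have hnl : (M ／ L).IsNonloop x := contract_isNonloop_iff.2 (by rwa [Matroid.closure_closure])
  refine (hnl.closure_eq_closure_iff_isCircuit_of_ne hxy).1 ?_
  rw [contract_closure_eq, contract_closure_eq, singleton_union, singleton_union, hspan x hx,
    hspan y hy]

lemma facetFlat2_closure [M.RankFinite] (hs : IsSimple M) (hrank : rk M M.E = 3)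
    (hH : M.Indep H) (hH2 : H.ncard = 2) (h3 : 3 ≤ (M.closure H).ncard) :
    FacetFlat2 M (M.closure H) :=
  ⟨(isFlat_iff_isFlat (M.closure_subset_ground H)).2 (M.isFlat_closure H),
    (rk_eq_ncard_of_isBasis'_s9 hH.isBasis_closure.isBasis').trans hH2,
    conn_restrict_closure hs hH hH2 h3, conn_contract_closure hrank hH hH2⟩

lemma ncard_inter_add_ncard_sdiff_of_isBase [M.RankFinite] (hB : M.IsBase B) (A : Set α) :
    (B ∩ A).ncard + (B \ A).ncard = rk M M.E := by
  rw [ncard_inter_add_ncard_sdiff_eq_ncard B A hB.finite, ncard_eq_rk_ground_of_isBase hB]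

lemma ncard_inter_le_two_iff [M.RankFinite] (hrank : rk M M.E = 3) (hB : M.IsBase B) :
    (B ∩ A).ncard ≤ 2 ↔ ¬ B ⊆ A := by
  have := ncard_inter_add_ncard_sdiff_of_isBase hB A
  rw [← sdiff_nonempty, ← ncard_pos hB.finite.sdiff]
  omega

lemma _root_.Matroid.IsBase.not_subset_closure_sdiff_singleton (hB₁ : M.IsBase B₁)
    (hB₂ : M.IsBase B₂) (ha : a ∈ B₁) : ¬ B₂ ⊆ M.closure (B₁ \ {a}) := fun h ↦ by
  have hE := closure_subset_closure_of_subset_closure h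
  rw [hB₂.closure_eq] at hE
  exact hB₁.indep.notMem_closure_sdiff_of_mem ha (hE (hB₁.subset_ground ha))

lemma _root_.Matroid.IsBase.exchange_of_notMem_closure (hB₁ : M.IsBase B₁) (ha : a ∈ B₁ \ B₂)
    (hb : b ∈ B₂) (hbE : b ∈ M.E) (hbcl : b ∉ M.closure (B₁ \ {a})) :
    b ∈ B₂ \ B₁ ∧ M.IsBase (insert b (B₁ \ {a})) := by
  have hbH : b ∉ B₁ \ {a} :=
    notMem_subset (M.subset_closure _ (sdiff_subset.trans hB₁.subset_ground)) hbcl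
  have hbB₁ : b ∉ B₁ := fun h ↦ hbH ⟨h, by rintro rfl; exact ha.2 hb⟩
  exact ⟨⟨hb, hbB₁⟩, hB₁.exchange_isBase_of_indep hbB₁
    (((hB₁.indep.sdiff _).insert_indep_iff_of_notMem hbH).2 ⟨hbE, hbcl⟩)⟩

lemma union_closure_sdiff_singleton_eq_ground [M.Finite] (hs : IsSimple M)
    (hrank : rk M M.E = 3)
    (hA : ∀ F, FacetFlat2 M F → (A ∩ F).ncard ≤ 1 ∨ F ⊆ A ∨ A ∪ F = M.E)
    (hB : M.IsBase B) (ha : a ∈ B) (hx : x ∈ A ∩ M.closure (B \ {a}))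
    (hy : y ∈ A ∩ M.closure (B \ {a})) (hxy : x ≠ y) (hz : z ∈ M.closure (B \ {a}) \ A) :
    A ∪ M.closure (B \ {a}) = M.E := by
  have hH2 : (B \ {a}).ncard = 2 := by
    rw [ncard_sdiff_singleton_of_mem ha, ncard_eq_rk_ground_of_isBase hB, hrank]
  have h3 : 3 ≤ (M.closure (B \ {a})).ncard := by
    rw [← ncard_eq_three.2 ⟨z, x, y, by grind, by grind, hxy, rfl⟩]
    exact ncard_le_ncard (insert_subset hz.1 (pair_subset hx.2 hy.2))
      (M.set_finite _ (M.closure_subset_ground _))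
  rcases hA _ (facetFlat2_closure hs hrank (hB.indep.sdiff _) hH2 h3) with h | h | h
  · have := ncard_le_ncard (pair_subset hx hy) (M.set_finite _ (inter_subset_right.trans
      (M.closure_subset_ground _)))
    rw [ncard_pair hxy] at this
    omega
  · exact absurd (h hz.1) hz.2
  · exact h

lemma exchangeProperty_isBase_not_subset [M.Finite] (hs : IsSimple M) (hrank : rk M M.E = 3)
    (hA : ∀ F, FacetFlat2 M F → (A ∩ F).ncard ≤ 1 ∨ F ⊆ A ∨ A ∪ F = M.E) :
    ExchangeProperty (fun B ↦ M.IsBase B ∧ ¬ B ⊆ A) := by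
  rintro B₁ B₂ ⟨hB₁, hB₁A⟩ ⟨hB₂, hB₂A⟩ a ha
  by_cases hHA : B₁ \ {a} ⊆ A
  swap
  · obtain ⟨b, hb, hbase⟩ := hB₁.exchange hB₂ ha
    exact ⟨b, hb, hbase, fun h ↦ hHA ((subset_insert _ _).trans h)⟩
  obtain ⟨z, hzB₂, hzA⟩ := not_subset.1 hB₂A
  by_cases hz : z ∈ M.closure (B₁ \ {a})
  · have haA : a ∉ A := fun haA ↦
      hB₁A (insert_sdiff_self_of_mem ha.1 ▸ insert_subset haA hHA)
    have hH : B₁ \ {a} ⊆ A ∩ M.closure (B₁ \ {a}) :=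
      subset_inter hHA (M.subset_closure _ (sdiff_subset.trans hB₁.subset_ground))
    have hH2 : (B₁ \ {a}).ncard = 2 := by
      rw [ncard_sdiff_singleton_of_mem ha.1, ncard_eq_rk_ground_of_isBase hB₁, hrank]
    obtain ⟨x, y, hxy, hxyH⟩ := ncard_eq_two.1 hH2
    have hE := union_closure_sdiff_singleton_eq_ground hs hrank hA hB₁ ha.1
      (hH (by simp [hxyH])) (hH (by simp [hxyH])) hxy ⟨hz, hzA⟩
    have haE : a ∈ A ∪ M.closure (B₁ \ {a}) := hE ▸ hB₁.subset_ground ha.1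
    exact absurd (haE.resolve_left haA) (hB₁.indep.notMem_closure_sdiff_of_mem ha.1)
  · obtain ⟨hb, hbase⟩ := hB₁.exchange_of_notMem_closure ha hzB₂ (hB₂.subset_ground hzB₂) hz
    exact ⟨z, hb, hbase, fun h ↦ hzA (h (mem_insert _ _))⟩

lemma exchangeProperty_isBase_ncard_sdiff_le_one [M.Finite] (hs : IsSimple M)
    (hrank : rk M M.E = 3)
    (hA : ∀ F, FacetFlat2 M F → (A ∩ F).ncard ≤ 1 ∨ F ⊆ A ∨ A ∪ F = M.E) :
    ExchangeProperty (fun B ↦ M.IsBase B ∧ (B \ A).ncard ≤ 1) := by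
  rintro B₁ B₂ ⟨hB₁, hB₁A⟩ ⟨hB₂, hB₂A⟩ a ha
  by_cases hHA : B₁ \ {a} ⊆ A
  · obtain ⟨b, hb, hbase⟩ := hB₁.exchange hB₂ ha
    refine ⟨b, hb, hbase, (ncard_le_ncard (t := {b}) ?_).trans (ncard_singleton b).le⟩
    rintro w ⟨rfl | hw, hwA⟩
    exacts [rfl, absurd (hHA hw) hwA]
  obtain ⟨p, hpH, hpA⟩ := not_subset.1 hHA
  by_cases hex : ∃ b ∈ B₂ ∩ A, b ∉ M.closure (B₁ \ {a})
  · obtain ⟨b, hb, hbcl⟩ := hex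
    obtain ⟨hb', hbase⟩ := hB₁.exchange_of_notMem_closure ha hb.1 (hB₂.subset_ground hb.1) hbcl
    refine ⟨b, hb', hbase, le_trans (ncard_le_ncard ?_ hB₁.finite.sdiff) hB₁A⟩
    rintro w ⟨rfl | hw, hwA⟩
    exacts [absurd hb.2 hwA, ⟨hw.1, hwA⟩]
  push Not at hex
  have h2 : 1 < (B₂ ∩ A).ncard := by
    have := ncard_inter_add_ncard_sdiff_of_isBase hB₂ A
    omega
  obtain ⟨x, y, hx, hy, hxy⟩ := (one_lt_ncard_iff (hB₂.finite.inter_of_left A)).1 h2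
  have hE := union_closure_sdiff_singleton_eq_ground hs hrank hA hB₁ ha.1 ⟨hx.2, hex x hx⟩
    ⟨hy.2, hex y hy⟩ hxy ⟨M.subset_closure _ (sdiff_subset.trans hB₁.subset_ground) hpH, hpA⟩
  refine absurd (fun w hw ↦ ?_) (hB₁.not_subset_closure_sdiff_singleton hB₂ ha.1)
  by_cases hwA : w ∈ A
  · exact hex w ⟨hw, hwA⟩
  · exact (hE ▸ hB₂.subset_ground hw : w ∈ A ∪ _).resolve_left hwA

lemma exists_matroid_isBase_iff [M.Finite] {P : Set α → Prop} (hP : ∃ B, M.IsBase B ∧ P B)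
    (hex : ExchangeProperty fun B ↦ M.IsBase B ∧ P B) :
    ∃ N : Matroid α, N.E = M.E ∧ ∀ B, N.IsBase B ↔ M.IsBase B ∧ P B :=
  ⟨Matroid.ofIsBaseOfFinite M.ground_finite _ hP hex fun _ hB ↦ hB.1.subset_ground, rfl,
    fun _ ↦ Iff.rfl⟩

lemma exists_isBase_two_le_ncard_sdiff [M.RankFinite] (hs : IsSimple M)
    (h : 2 ≤ (M.E \ A).ncard) : ∃ B, M.IsBase B ∧ 2 ≤ (B \ A).ncard := by
  obtain ⟨x, y, hx, hy, hxy⟩ := (one_lt_ncard_iff (finite_of_ncard_pos (by omega))).1 h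
  obtain ⟨B, hB, hxyB⟩ :=
    (hs _ (pair_subset hx.1 hy.1) (ncard_pair hxy).le).exists_isBase_superset
  refine ⟨B, hB, ?_⟩
  rw [← ncard_pair hxy]
  exact ncard_le_ncard (pair_subset ⟨hxyB (by simp), hx.2⟩ ⟨hxyB (by simp), hy.2⟩)
    hB.finite.sdiff

lemma ncard_inter_le_one_or_subset_or_union_eq [M.Finite] (hs : IsSimple M)
    (hrank : rk M M.E = 3) (hA : A ⊆ M.E) {N : Matroid α}
    (hN : ∀ B, N.IsBase B ↔ M.IsBase B ∧ ¬ B ⊆ A) (hspan : ∃ B, M.IsBase B ∧ B ⊆ A)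
    (hF : M.IsFlat F) (hF2 : rk M F = 2) : (A ∩ F).ncard ≤ 1 ∨ F ⊆ A ∨ A ∪ F = M.E := by
  by_contra! ⟨h1, hFA, hAF⟩
  obtain ⟨a, b, ha, hb, hab⟩ :=
    (one_lt_ncard_iff (M.set_finite _ (inter_subset_left.trans hA))).1 h1
  obtain ⟨f, hfF, hfA⟩ := not_subset.1 hFA
  obtain ⟨g, hgE, hgAF⟩ :=
    exists_of_ssubset ((union_subset hA hF.subset_ground).ssubset_of_ne hAF)
  have habE : {a, b} ⊆ M.E := pair_subset (hA ha.1) (hA hb.1)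
  have hgcl : g ∉ M.closure {a, b} := fun hg ↦
    hgAF (.inr (hF.closure ▸ M.closure_subset_closure (pair_subset ha.2 hb.2) hg))
  have hgab : g ∉ ({a, b} : Set α) := notMem_subset (M.subset_closure _ habE) hgcl
  have hab_ind : M.Indep {a, b} := hs _ habE (ncard_pair hab).le
  have hB₁ : N.IsBase (insert g {a, b}) := (hN _).2 ⟨isBase_of_indep_of_rk_ground_le
    ((hab_ind.insert_indep_iff_of_notMem hgab).2 ⟨hgE, hgcl⟩)
    (by rw [ncard_insert_of_notMem hgab, ncard_pair hab, hrank]),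
    fun h ↦ hgAF (.inl (h (mem_insert g _)))⟩
  obtain ⟨Bhi, hBhi, hBhiA⟩ := hspan
  obtain ⟨B₂, hB₂, hfB₂, hB₂f⟩ := (hs {f} (singleton_subset_iff.2 (hF.subset_ground hfF))
    (by simp)).exists_isBase_subset_union_isBase hBhi
  have hgB₂ : g ∉ B₂ := fun hg ↦ (hB₂f hg).elim (fun hgf ↦ hgAF (.inr (hgf ▸ hfF)))
    fun hg ↦ hgAF (.inl (hBhiA hg))
  obtain ⟨y, ⟨hyB₂, hyB₁⟩, hy⟩ :=
    hB₁.exchange ((hN _).2 ⟨hB₂, fun h ↦ hfA (h (hfB₂ rfl))⟩) ⟨mem_insert g _, hgB₂⟩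
  rw [insert_sdiff_self_of_notMem hgab] at hy
  obtain ⟨hyM, hyA⟩ := (hN _).1 hy
  obtain rfl : y = f := (hB₂f hyB₂).elim id
    fun hy ↦ absurd (insert_subset (hBhiA hy) (pair_subset ha.1 hb.1)) hyA
  have := ncard_le_rk_of_indep hyM.indep (insert_subset hfF (pair_subset ha.2 hb.2))
  rw [hF2, ncard_insert_of_notMem (fun h ↦ hyB₁ (mem_insert_of_mem _ h)), ncard_pair hab] at this
  omega

theorem twoDecomposable_iff_general (M : Matroid α) (hfin : M.E.Finite)
    (hsimple : IsSimple M) (hrank : rk M M.E = 3)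
    (A : Set α) (hA : A ⊆ M.E) :
    TwoDecomposableBy M A 2 ↔
      (2 ≤ (M.E \ A).ncard ∧ rk M A = 3 ∧
        ∀ F : Set α, FacetFlat2 M F →
          (A ∩ F).ncard ≤ 1 ∨ F ⊆ A ∨ A ∪ F = M.E) := by
  have : M.Finite := ⟨hfin⟩
  have hsum := fun B (hB : M.IsBase B) ↦ ncard_inter_add_ncard_sdiff_of_isBase hB A
  have hnot := fun B (hB : M.IsBase B) ↦ ncard_inter_le_two_iff (A := A) hrank hB
  have hspan : rk M A = 3 ↔ ∃ B, M.IsBase B ∧ B ⊆ A := hrank ▸ rk_eq_rk_ground_iff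
  constructor
  · rintro ⟨⟨N, -, hN⟩, -, ⟨Bhi, hBhi, hgt⟩, ⟨Blo, hBlo, hlt⟩⟩
    have hBhiA : Bhi ⊆ A := not_not.1 fun h ↦ by have := (hnot Bhi hBhi).2 h; omega
    refine ⟨?_, hspan.2 ⟨Bhi, hBhi, hBhiA⟩, fun F hF ↦ ?_⟩
    · have := hsum Blo hBlo
      exact (by omega : 2 ≤ (Blo \ A).ncard).trans <|
        ncard_le_ncard (sdiff_subset_sdiff_left hBlo.subset_ground) (M.set_finite _ sdiff_subset)
    · exact ncard_inter_le_one_or_subset_or_union_eq hsimple hrank hA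
        (fun B ↦ (hN B).trans (and_congr_right (hnot B))) ⟨Bhi, hBhi, hBhiA⟩
        ((isFlat_iff_isFlat hF.1.1).1 hF.1) hF.2.1
  · rintro ⟨hEA, hrkA, hF⟩
    obtain ⟨Bhi, hBhi, hBhiA⟩ := hspan.1 hrkA
    obtain ⟨Blo, hBlo, hBloA⟩ := exists_isBase_two_le_ncard_sdiff hsimple hEA
    have hhi := hsum Bhi hBhi
    have hlo := hsum Blo hBlo
    have hBhiA' : (Bhi \ A).ncard = 0 := by rw [sdiff_eq_empty.2 hBhiA, ncard_empty]
    obtain ⟨N₁, hN₁E, hN₁⟩ :=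
      exists_matroid_isBase_iff ⟨Blo, hBlo, (hnot Blo hBlo).1 (by omega)⟩
        (exchangeProperty_isBase_not_subset hsimple hrank hF)
    obtain ⟨N₂, hN₂E, hN₂⟩ := exists_matroid_isBase_iff ⟨Bhi, hBhi, by omega⟩
      (exchangeProperty_isBase_ncard_sdiff_le_one hsimple hrank hF)
    refine ⟨⟨N₁, hN₁E, fun B ↦ ?_⟩, ⟨N₂, hN₂E, fun B ↦ ?_⟩, ⟨Bhi, hBhi, by omega⟩,
      ⟨Blo, hBlo, by omega⟩⟩
    · rw [hN₁]
      exact and_congr_right fun hB ↦ (hnot B hB).symm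
    · rw [hN₂]
      exact and_congr_right fun hB ↦ by have := hsum B hB; omega

/-- Characterization of 2-decomposability of a connected simple rank-3 matroid by the
hyperplane `(A,2)_=`. -/
theorem twoDecomposable_iff (M : Matroid α) (hfin : M.E.Finite)
    (hconn : Conn M) (hsimple : IsSimple M) (hrank : rk M M.E = 3)
    (A : Set α) (hA : A ⊆ M.E) :
    TwoDecomposableBy M A 2 ↔
      (2 ≤ (M.E \ A).ncard ∧ rk M A = 3 ∧
        ∀ F : Set α, FacetFlat2 M F →
          (A ∩ F).ncard ≤ 1 ∨ F ⊆ A ∨ A ∪ F = M.E) :=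
  twoDecomposable_iff_general M hfin hsimple hrank A hA

end PaperWMO
end

section
/- Let M be a connected simple matroid of rank 3 on a finite ground set E, and let {A1, A2, A3} be a 3-partition in M. Then there do not exist distinct elements x, y ∈ A3 together with facet-defining flats F1 and F2 of rank 2 of M such that {x,y} ⊆ F1, F1 ∩ A1 ≠ ∅, {x,y} ⊆ F2 and F2 ∩ A2 ≠ ∅. (Equivalently, the graphs g(A1, A3) and g(A2, A3) have no common edge.) -/
/-!
Two distinct points of a simple matroid are independent, so two flats of rank 2 through both
have an intersection of rank 2; by submodularity their union has rank 2 as well and hence equals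
each of them. A single facet-defining flat through `x, y ∈ A₃` meeting `A₁` and `A₂` would then
meet all three parts of the 3-partition.
-/

open Set Matroid

namespace PaperWMO

variable {α : Type*}

/-- On a set of infinite rank both sides are junk `0`: `sSup` of an unbounded set of naturals,
and `ENat.toNat ⊤`. -/
theorem rk_eq_toNat_eRk (M : Matroid α) (X : Set α) : rk M X = (M.eRk X).toNat := by
  obtain ⟨B, hB⟩ := M.exists_isBasis' X
  rw [← hB.encard_eq_eRk]
  rcases B.finite_or_infinite with hBfin | hBinf
  · refine IsGreatest.csSup_eq ⟨⟨B, hB.indep, hB.subset, ncard_def B⟩, ?_⟩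
    rintro _ ⟨I, hI, hIX, rfl⟩
    rw [ncard_def]
    exact ENat.toNat_le_toNat (hB.encard_eq_eRk ▸ hI.encard_le_eRk_of_subset hIX)
      hBfin.encard_lt_top.ne
  · rw [hBinf.encard_eq, ENat.toNat_top]
    refine Nat.sSup_of_not_bddAbove fun ⟨m, hm⟩ ↦ ?_
    obtain ⟨I, hIB, -, hIcard⟩ := hBinf.exists_subset_ncard_eq (m + 1)
    have : m + 1 ≤ m := hm ⟨I, hB.indep.subset hIB, hIB.trans hB.subset, hIcard⟩
    omega

theorem eRk_eq_of_rk_eq {M : Matroid α} {X : Set α} {n : ℕ} (hn : n ≠ 0) (h : rk M X = n) :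
    M.eRk X = n :=
  (ENat.toNat_eq_iff hn).1 (rk_eq_toNat_eRk M X ▸ h)

theorem IsFlat.eq_of_le_eRk_inter {M : Matroid α} {F₁ F₂ : Set α} {n : ℕ}
    (hF₁ : IsFlat M F₁) (hF₂ : IsFlat M F₂) (hn : n ≠ 0) (h₁ : rk M F₁ = n)
    (h₂ : rk M F₂ = n) (hinter : n ≤ M.eRk (F₁ ∩ F₂)) : F₁ = F₂ := by
  have e₁ := eRk_eq_of_rk_eq hn h₁
  have e₂ := eRk_eq_of_rk_eq hn h₂
  have hunion : M.eRk (F₁ ∪ F₂) = n := by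
    refine le_antisymm ?_ (e₁ ▸ M.eRk_mono subset_union_left)
    have hsubmod := M.eRk_submod F₁ F₂
    rw [e₁, e₂] at hsubmod
    exact (ENat.add_le_add_iff_left (ENat.natCast_ne_top n)).1
      ((add_le_add_left hinter _).trans hsubmod)
  have hrk : rk M (F₁ ∪ F₂) = n := by rw [rk_eq_toNat_eRk, hunion, ENat.toNat_natCast]
  have hsub : F₁ ∪ F₂ ⊆ M.E := union_subset hF₁.1 hF₂.1
  calc F₁ = F₁ ∪ F₂ := (hF₁.2 _ subset_union_left hsub (hrk.trans h₁.symm)).symm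
    _ = F₂ := hF₂.2 _ subset_union_right hsub (hrk.trans h₂.symm)

theorem IsFlat.eq_of_pair_subset_inter {M : Matroid α} {F₁ F₂ : Set α} {x y : α}
    (hM : IsSimple M) (hF₁ : IsFlat M F₁) (hF₂ : IsFlat M F₂) (h₁ : rk M F₁ = 2)
    (h₂ : rk M F₂ = 2) (hxy : x ≠ y) (hx : x ∈ F₁ ∩ F₂) (hy : y ∈ F₁ ∩ F₂) : F₁ = F₂ := by
  have hpair : M.Indep {x, y} :=
    hM _ (pair_subset (hF₁.1 hx.1) (hF₁.1 hy.1)) (ncard_pair hxy).le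
  refine hF₁.eq_of_le_eRk_inter hF₂ two_ne_zero h₁ h₂ ?_
  calc ((2 : ℕ) : ℕ∞) = ({x, y} : Set α).encard := (encard_pair hxy).symm
    _ ≤ M.eRk (F₁ ∩ F₂) := hpair.encard_le_eRk_of_subset (pair_subset hx hy)

theorem graphs_no_common_edge_general (M : Matroid α) (hsimple : IsSimple M)
    (A₁ A₂ A₃ : Set α) (hpart : ThreePartition M A₁ A₂ A₃) :
    ¬ ∃ (x y : α) (F₁ F₂ : Set α), x ∈ A₃ ∧ y ∈ A₃ ∧ x ≠ y ∧
      FacetFlat2 M F₁ ∧ x ∈ F₁ ∧ y ∈ F₁ ∧ (F₁ ∩ A₁).Nonempty ∧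
      FacetFlat2 M F₂ ∧ x ∈ F₂ ∧ y ∈ F₂ ∧ (F₂ ∩ A₂).Nonempty := by
  rintro ⟨x, y, F₁, F₂, hx, -, hxy, hF₁, hxF₁, hyF₁, hF₁A₁, hF₂, hxF₂, hyF₂, hF₂A₂⟩
  obtain rfl : F₁ = F₂ := IsFlat.eq_of_pair_subset_inter hsimple hF₁.1 hF₂.1 hF₁.2.1 hF₂.2.1
    hxy ⟨hxF₁, hxF₂⟩ ⟨hyF₁, hyF₂⟩
  obtain ⟨-, -, -, -, -, -, -, hno_flat_meets_all, -⟩ := hpart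
  exact hno_flat_meets_all ⟨F₁, hF₁, hF₁A₁, hF₂A₂, x, hxF₁, hx⟩

/-- For a 3-partition `{A₁, A₂, A₃}` in `M`, the graphs `g(A₁, A₃)` and `g(A₂, A₃)` have
no common edge. -/
theorem graphs_no_common_edge (M : Matroid α) (hfin : M.E.Finite)
    (hconn : Conn M) (hsimple : IsSimple M) (hrank : rk M M.E = 3)
    (A₁ A₂ A₃ : Set α) (hpart : ThreePartition M A₁ A₂ A₃) :
    ¬ ∃ (x y : α) (F₁ F₂ : Set α), x ∈ A₃ ∧ y ∈ A₃ ∧ x ≠ y ∧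
      FacetFlat2 M F₁ ∧ x ∈ F₁ ∧ y ∈ F₁ ∧ (F₁ ∩ A₁).Nonempty ∧
      FacetFlat2 M F₂ ∧ x ∈ F₂ ∧ y ∈ F₂ ∧ (F₂ ∩ A₂).Nonempty :=
  graphs_no_common_edge_general M hsimple A₁ A₂ A₃ hpart

end PaperWMO
end
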